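/- arXiv:2206.09642 — 2 statements merged into one kernel-verified Lean document; each statement's English description precedes it below -/
import Mathlib

section
/- Fix M > 0 and 0 < ε ≤ M/4. Define the Borel probability measures on [0,M]: ν̃ = δ_{M/2} (the point mass at M/2) and μ̃ = 2√(ε/M)·δ_{M/2 − √(Mε)/2} + (1 − 2√(ε/M))·δ_{M/2}. Then d_W(μ̃,ν̃) ≤ ε, and for every price x ∈ [0,M], (1/2)·(opt(μ̃) − R(x,μ̃)) + (1/2)·(opt(ν̃) − R(x,ν̃)) ≥ √(M·ε)/4. -/
open MeasureTheory

noncomputable section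

/-- Cumulative distribution function `F(t) = μ([0,t])`. -/
def cdf0 (μ : Measure ℝ) (t : ℝ) : ℝ := (μ (Set.Icc 0 t)).toReal

/-- Wasserstein-1 distance between measures on `[0,M]`: `∫₀^M |F(t) - H(t)| dt`. -/
def wassDist (M : ℝ) (μ ν : Measure ℝ) : ℝ :=
  ∫ t in Set.Icc (0:ℝ) M, |cdf0 μ t - cdf0 ν t|

/-- Expected pricing revenue `R(x,μ) = x · μ{ξ : ξ ≥ x}`. -/
def rev (x : ℝ) (μ : Measure ℝ) : ℝ := x * (μ {ξ : ℝ | x ≤ ξ}).toReal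

/-- Optimal revenue `opt(μ) = sup_{x ∈ [0,M]} R(x,μ)`. -/
def optRev (M : ℝ) (μ : Measure ℝ) : ℝ := ⨆ x : Set.Icc (0:ℝ) M, rev x.1 μ

/-! Under `ν̃` the value is `M/2`; under `μ̃` it drops by `√(Mε)/2` with probability
`p = 2√(ε/M)`, which costs exactly `p · √(Mε)/2 = ε` in `d_W`. The optimal revenues are
at least `M/2 - √(Mε)/2` and `M/2`, whereas any single price earns at most `M - √(Mε)`
summed over the two markets: `p` is tuned so that the two candidate prices
`M/2 - √(Mε)/2` and `M/2` tie at this value. So the two regrets add up to at least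
`√(Mε)/2`. -/

open Set

-- `ENNReal.ofReal` clips negative weights to `0`, hence the hypotheses `0 ≤ p ≤ 1` below.
def mixture (p : ℝ) (μ ν : Measure ℝ) : Measure ℝ :=
  ENNReal.ofReal p • μ + ENNReal.ofReal (1 - p) • ν

section Mixture

variable {p : ℝ} {μ ν : Measure ℝ} [IsFiniteMeasure μ] [IsFiniteMeasure ν]

instance : IsFiniteMeasure (mixture p μ ν) := by
  have := μ.smul_finite (c := ENNReal.ofReal p) ENNReal.ofReal_ne_top
  have := ν.smul_finite (c := ENNReal.ofReal (1 - p)) ENNReal.ofReal_ne_top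
  unfold mixture
  infer_instance

theorem measureReal_mixture_apply (hp0 : 0 ≤ p) (hp1 : p ≤ 1) (s : Set ℝ) :
    (mixture p μ ν).real s = p * μ.real s + (1 - p) * ν.real s := by
  rw [mixture, measureReal_add_apply (ENNReal.mul_ne_top ENNReal.ofReal_ne_top (measure_ne_top _ _))
    (ENNReal.mul_ne_top ENNReal.ofReal_ne_top (measure_ne_top _ _)), measureReal_ennreal_smul_apply,
    measureReal_ennreal_smul_apply, ENNReal.toReal_ofReal hp0,
    ENNReal.toReal_ofReal (sub_nonneg.mpr hp1)]

theorem rev_mixture (hp0 : 0 ≤ p) (hp1 : p ≤ 1) (x : ℝ) :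
    rev x (mixture p μ ν) = p * rev x μ + (1 - p) * rev x ν := by
  simp only [rev, ← measureReal_def, measureReal_mixture_apply hp0 hp1]
  ring

theorem cdf0_mixture (hp0 : 0 ≤ p) (hp1 : p ≤ 1) (t : ℝ) :
    cdf0 (mixture p μ ν) t = p * cdf0 μ t + (1 - p) * cdf0 ν t := by
  simp only [cdf0, ← measureReal_def, measureReal_mixture_apply hp0 hp1]

theorem wassDist_mixture_left (M : ℝ) (hp0 : 0 ≤ p) (hp1 : p ≤ 1) :
    wassDist M (mixture p μ ν) ν = p * wassDist M μ ν := by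
  have hdiff (t : ℝ) :
      |cdf0 (mixture p μ ν) t - cdf0 ν t| = p * |cdf0 μ t - cdf0 ν t| := by
    rw [cdf0_mixture hp0 hp1, ← abs_of_nonneg hp0, ← abs_mul, abs_of_nonneg hp0]
    ring_nf
  simp only [wassDist, hdiff, integral_const_mul]

end Mixture

theorem cdf0_dirac {a : ℝ} (ha : 0 ≤ a) (t : ℝ) :
    cdf0 (Measure.dirac a) t = (Ici a).indicator 1 t := by
  by_cases hat : a ≤ t <;> simp [cdf0, Measure.dirac_apply' _ measurableSet_Icc, ha, hat]

theorem wassDist_dirac_dirac {M a b : ℝ} (ha : 0 ≤ a) (hab : a ≤ b) (hbM : b ≤ M) :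
    wassDist M (Measure.dirac a) (Measure.dirac b) = b - a := by
  have hdiff (t : ℝ) :
      |cdf0 (Measure.dirac a) t - cdf0 (Measure.dirac b) t| = (Ico a b).indicator 1 t := by
    rw [cdf0_dirac ha, cdf0_dirac (ha.trans hab), ← Pi.sub_apply,
      ← indicator_sdiff (Ici_subset_Ici.mpr hab), Ici_sdiff_Ici]
    exact abs_of_nonneg (indicator_nonneg (fun _ _ ↦ zero_le_one) t)
  have hsub : Icc 0 M ∩ Ico a b = Ico a b :=
    inter_eq_self_of_subset_right (Ico_subset_Icc_self.trans (Icc_subset_Icc ha hbM))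
  simp only [wassDist, hdiff]
  rw [setIntegral_indicator measurableSet_Ico, hsub]
  simp [Real.volume_real_Ico_of_le hab]

theorem rev_dirac (x b : ℝ) : rev x (Measure.dirac b) = if x ≤ b then x else 0 := by
  by_cases hxb : x ≤ b <;> simp [rev, hxb]

theorem rev_le_optRev {M x : ℝ} (hx : x ∈ Icc 0 M) (μ : Measure ℝ) [IsFiniteMeasure μ] :
    rev x μ ≤ optRev M μ := by
  have hbdd : BddAbove (range fun y : Icc (0:ℝ) M ↦ rev y.1 μ) := by
    refine ⟨M * μ.real univ, ?_⟩
    rintro _ ⟨⟨y, hy⟩, rfl⟩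
    exact mul_le_mul hy.2 (measureReal_mono (subset_univ _)) measureReal_nonneg
      (hx.1.trans hx.2)
  exact le_ciSup hbdd ⟨x, hx⟩

section TwoPoint

variable {p a b : ℝ} (hp0 : 0 ≤ p) (hp1 : p ≤ 1) (ha : 0 ≤ a) (hab : a ≤ b)
include hp0 hp1 ha hab

theorem rev_mixture_dirac_add_rev_dirac_le (x : ℝ) :
    rev x (mixture p (Measure.dirac a) (Measure.dirac b)) + rev x (Measure.dirac b) ≤
      max (2 * a) ((2 - p) * b) := by
  rw [rev_mixture hp0 hp1, rev_dirac, rev_dirac]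
  split_ifs with hxa hxb
  · exact le_max_of_le_left (by linarith)
  · exact absurd (hxa.trans hab) hxb
  · exact le_max_of_le_right (by nlinarith)
  · exact le_max_of_le_left (by linarith)

theorem add_sub_max_le_regret_mixture_dirac {M : ℝ} (hbM : b ≤ M) (x : ℝ) :
    a + b - max (2 * a) ((2 - p) * b) ≤
      (optRev M (mixture p (Measure.dirac a) (Measure.dirac b)) -
          rev x (mixture p (Measure.dirac a) (Measure.dirac b))) +
        (optRev M (Measure.dirac b) - rev x (Measure.dirac b)) := by
  have hμ : a ≤ optRev M (mixture p (Measure.dirac a) (Measure.dirac b)) :=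
    calc a = rev a (mixture p (Measure.dirac a) (Measure.dirac b)) := by
          rw [rev_mixture hp0 hp1, rev_dirac, rev_dirac, if_pos le_rfl, if_pos hab]; ring
      _ ≤ _ := rev_le_optRev ⟨ha, hab.trans hbM⟩ _
  have hν : b ≤ optRev M (Measure.dirac b) := by
    simpa [rev_dirac] using rev_le_optRev ⟨ha.trans hab, hbM⟩ (Measure.dirac b)
  linarith [rev_mixture_dirac_add_rev_dirac_le hp0 hp1 ha hab x]

end TwoPoint

/-- Two-point Bayesian lower bound of order `√(Mε)` for pricing under Wasserstein
heterogeneity. -/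
theorem pricing_wasserstein_lower_bound
    (M ε : ℝ) (hM : 0 < M) (hε : 0 < ε) (hεM : ε ≤ M / 4)
    (νt μt : Measure ℝ)
    (hνt : νt = Measure.dirac (M / 2))
    (hμt : μt =
      ENNReal.ofReal (2 * Real.sqrt (ε / M)) •
        Measure.dirac (M / 2 - Real.sqrt (M * ε) / 2) +
      ENNReal.ofReal (1 - 2 * Real.sqrt (ε / M)) • Measure.dirac (M / 2)) :
    wassDist M μt νt ≤ ε ∧
    ∀ x ∈ Set.Icc (0:ℝ) M,
      (1/2) * (optRev M μt - rev x μt) + (1/2) * (optRev M νt - rev x νt) ≥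
        Real.sqrt (M * ε) / 4 := by
  set s := √(M * ε)
  have hs0 : 0 ≤ s := Real.sqrt_nonneg _
  have hs2 : s ^ 2 = M * ε := Real.sq_sqrt (by positivity)
  have hsM : s ≤ M / 2 := by nlinarith
  have hq : √(ε / M) = s / M := by
    rw [← Real.sqrt_sq (div_nonneg hs0 hM.le), div_pow, hs2]
    congr 1
    field_simp
  set p := 2 * (s / M) with hp
  have hp0 : 0 ≤ p := by positivity
  have hp1 : p ≤ 1 := by
    rw [hp, mul_div_assoc', div_le_one hM]
    linarith
  have hbM : (2 - p) * (M / 2) = M - s := by rw [hp]; field_simp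
  replace hμt : μt = mixture p (Measure.dirac (M / 2 - s / 2)) (Measure.dirac (M / 2)) := by
    rw [hμt, hq]; rfl
  subst hμt hνt
  constructor
  · rw [wassDist_mixture_left M hp0 hp1,
      wassDist_dirac_dirac (by linarith) (by linarith) (by linarith), hp]
    field_simp
    nlinarith
  · intro x _
    have := add_sub_max_le_regret_mixture_dirac (a := M / 2 - s / 2) (b := M / 2) (M := M)
      hp0 hp1 (by linarith) (by linarith) (by linarith) x
    rw [hbM, show 2 * (M / 2 - s / 2) = M - s by ring, max_self] at this
    linarith

end
end

section
/- Fix M > 0 and underage/overage costs c_u, c_o > 0. Let μ and ν be Borel probability measures on [0,M], and let x_ν ∈ [0,M] satisfy C(x_ν,ν) = opt(ν). Then: (i) C(x_ν,μ) − opt(μ) ≤ 2·max(c_u,c_o)·d_W(μ,ν); (ii) C(x_ν,μ) − opt(μ) ≤ 2·max(c_u,c_o)·M·d_K(μ,ν). -/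
open MeasureTheory

noncomputable section

/-- Kolmogorov distance: `sup_{t ∈ ℝ} |F(t) - H(t)|`. -/
def kolDist (μ ν : Measure ℝ) : ℝ := ⨆ t : ℝ, |cdf0 μ t - cdf0 ν t|

/-- Expected newsvendor cost with underage cost `cu` and overage cost `co`. -/
def nvCost (cu co x : ℝ) (μ : Measure ℝ) : ℝ :=
  ∫ ξ, (cu * max (ξ - x) 0 + co * max (x - ξ) 0) ∂μ

/-- Optimal newsvendor cost `opt(μ) = inf_{x ∈ [0,M]} C(x,μ)`. -/
def optNv (cu co M : ℝ) (μ : Measure ℝ) : ℝ :=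
  ⨅ x : Set.Icc (0:ℝ) M, nvCost cu co x.1 μ

/-! For demand supported on `[0, M]` the layer-cake formula gives
`C(x, μ) = cu ∫_x^M (1 - F) + co ∫_0^x F`, so for a fixed order `x` the costs under `μ` and `ν`
differ by at most `max cu co · ∫_0^M |F - H| = max cu co · d_W(μ, ν)`. The SAA order pays this
uniform error twice: once at `x_ν` itself and once at the infimum. Finally `d_W ≤ M · d_K`. -/

open Set

/- The strict superlevel sets `{ξ | t < ξ - x}` are complements of the closed sets `Iic` that
define `cdf0`, so this variant avoids left limits of the distribution function. -/
lemma MeasureTheory.Integrable.integral_eq_integral_Ioc_meas_lt {α : Type*} [MeasurableSpace α]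
    {μ : Measure α} {f : α → ℝ} {M : ℝ}
    (f_intble : Integrable f μ) (f_nn : 0 ≤ᵐ[μ] f) (f_bdd : f ≤ᵐ[μ] fun _ ↦ M) :
    ∫ ω, f ω ∂μ = ∫ t in Ioc 0 M, μ.real {a | t < f a} := by
  rw [f_intble.integral_eq_integral_Ioc_meas_le f_nn f_bdd]
  refine integral_congr_ae (ae_restrict_of_ae ?_)
  filter_upwards [meas_le_ae_eq_meas_lt μ volume f] with t ht
  exact congrArg ENNReal.toReal ht

lemma Continuous.integrable_of_ae_mem_isCompact {X : Type*} [TopologicalSpace X] [T2Space X]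
    [MeasurableSpace X] [OpensMeasurableSpace X] {μ : Measure X} [IsFiniteMeasureOnCompacts μ]
    {K : Set X} (hK : IsCompact K) (hμ : ∀ᵐ ξ ∂μ, ξ ∈ K) {f : X → ℝ} (hf : Continuous f) :
    Integrable f μ := by
  rw [← Measure.restrict_eq_self_of_ae_mem hμ]
  exact hf.continuousOn.integrableOn_compact hK

section Cdf

variable {μ : Measure ℝ}

lemma cdf0_nonneg (t : ℝ) : 0 ≤ cdf0 μ t := ENNReal.toReal_nonneg

lemma cdf0_le_one [IsProbabilityMeasure μ] (t : ℝ) : cdf0 μ t ≤ 1 := measureReal_le_one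

lemma cdf0_mono [IsFiniteMeasure μ] : Monotone (cdf0 μ) := fun _ _ hst ↦
  measureReal_mono (Icc_subset_Icc_right hst)

lemma cdf0_eq_measureReal_Iic (h0 : ∀ᵐ ξ ∂μ, 0 ≤ ξ) (t : ℝ) : cdf0 μ t = μ.real (Iic t) := by
  rw [cdf0, ← Iic_inter_Ici, measureReal_def, measure_inter_conull (t := Ici 0) h0]

lemma cdf0_eq_one_sub_measureReal_Ioi [IsProbabilityMeasure μ] (h0 : ∀ᵐ ξ ∂μ, 0 ≤ ξ) (t : ℝ) :
    cdf0 μ t = 1 - μ.real (Ioi t) := by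
  rw [← compl_Iic, probReal_compl_eq_one_sub measurableSet_Iic, sub_sub_cancel,
    cdf0_eq_measureReal_Iic h0]

lemma abs_cdf0_sub_cdf0_le_kolDist (μ ν : Measure ℝ) [IsProbabilityMeasure μ]
    [IsProbabilityMeasure ν] (t : ℝ) : |cdf0 μ t - cdf0 ν t| ≤ kolDist μ ν :=
  le_ciSup (f := fun t ↦ |cdf0 μ t - cdf0 ν t|) ⟨1, by
    rintro _ ⟨s, rfl⟩
    exact abs_sub_le_of_nonneg_of_le (cdf0_nonneg s) (cdf0_le_one s) (cdf0_nonneg s)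
      (cdf0_le_one s)⟩ t

end Cdf

lemma integral_max_const_sub_eq_integral_cdf0 {μ : Measure ℝ} [IsFiniteMeasure μ]
    (h0 : ∀ᵐ ξ ∂μ, 0 ≤ ξ) {x : ℝ} (hx : 0 ≤ x) :
    ∫ ξ, max (x - ξ) 0 ∂μ = ∫ t in 0..x, cdf0 μ t := by
  have hbdd : ∀ᵐ ξ ∂μ, max (x - ξ) 0 ≤ x := h0.mono fun ξ hξ ↦ max_le (by linarith) hx
  have hint : Integrable (fun ξ ↦ max (x - ξ) 0) μ :=
    .of_bound (by fun_prop) x <| hbdd.mono fun ξ hξ ↦ by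
      rwa [Real.norm_of_nonneg (le_max_right _ _)]
  rw [hint.integral_eq_integral_Ioc_meas_le (.of_forall fun _ ↦ le_max_right _ _) hbdd,
    ← intervalIntegral.integral_of_le hx]
  calc ∫ t in 0..x, μ.real {ξ | t ≤ max (x - ξ) 0}
      = ∫ t in 0..x, cdf0 μ (x - t) := by
        refine intervalIntegral.integral_congr_ae (.of_forall fun t ht ↦ ?_)
        have ht0 : 0 < t := (uIoc_of_le hx ▸ ht).1
        have : {ξ | t ≤ max (x - ξ) 0} = Iic (x - t) := by
          ext ξ; simp only [mem_ofPred_eq, le_max_iff, mem_Iic]; constructor <;> intro h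
          · rcases h with h | h <;> linarith
          · left; linarith
        rw [this, cdf0_eq_measureReal_Iic h0]
    _ = ∫ t in 0..x, cdf0 μ t := by simp [intervalIntegral.integral_comp_sub_left]

lemma integral_max_sub_const_eq_integral_one_sub_cdf0 {μ : Measure ℝ} [IsProbabilityMeasure μ]
    {M : ℝ} (hμ : ∀ᵐ ξ ∂μ, ξ ∈ Icc 0 M) {x : ℝ} (hx : x ≤ M) :
    ∫ ξ, max (ξ - x) 0 ∂μ = ∫ t in x..M, (1 - cdf0 μ t) := by
  have hbdd : ∀ᵐ ξ ∂μ, max (ξ - x) 0 ≤ M - x :=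
    hμ.mono fun ξ hξ ↦ max_le (by linarith [hξ.2]) (by linarith)
  have hint : Integrable (fun ξ ↦ max (ξ - x) 0) μ :=
    (by fun_prop : Continuous _).integrable_of_ae_mem_isCompact isCompact_Icc hμ
  rw [hint.integral_eq_integral_Ioc_meas_lt (.of_forall fun _ ↦ le_max_right _ _) hbdd,
    ← intervalIntegral.integral_of_le (sub_nonneg.2 hx)]
  calc ∫ t in 0..M - x, μ.real {ξ | t < max (ξ - x) 0}
      = ∫ t in 0..M - x, (1 - cdf0 μ (x + t)) := by
        refine intervalIntegral.integral_congr_ae (.of_forall fun t ht ↦ ?_)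
        have ht0 : 0 < t := (uIoc_of_le (sub_nonneg.2 hx) ▸ ht).1
        have : {ξ | t < max (ξ - x) 0} = Ioi (x + t) := by
          ext ξ; simp only [mem_ofPred_eq, lt_max_iff, mem_Ioi]; constructor <;> intro h
          · rcases h with h | h <;> linarith
          · left; linarith
        rw [this, cdf0_eq_one_sub_measureReal_Ioi (hμ.mono fun _ h ↦ h.1), sub_sub_cancel]
    _ = ∫ t in x..M, (1 - cdf0 μ t) := by
        simp [intervalIntegral.integral_comp_add_left (fun t ↦ 1 - cdf0 μ t)]

lemma nvCost_eq_integral_cdf0 (cu co : ℝ) {M : ℝ} {μ : Measure ℝ} [IsProbabilityMeasure μ]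
    (hμ : ∀ᵐ ξ ∂μ, ξ ∈ Icc 0 M) {x : ℝ} (hx : x ∈ Icc 0 M) :
    nvCost cu co x μ = cu * (∫ t in x..M, 1 - cdf0 μ t) + co * ∫ t in 0..x, cdf0 μ t := by
  have hint {f : ℝ → ℝ} (hf : Continuous f) : Integrable f μ :=
    hf.integrable_of_ae_mem_isCompact isCompact_Icc hμ
  rw [nvCost, integral_add (hint (by fun_prop)) (hint (by fun_prop)), integral_const_mul,
    integral_const_mul, integral_max_sub_const_eq_integral_one_sub_cdf0 hμ hx.2,
    integral_max_const_sub_eq_integral_cdf0 (hμ.mono fun _ h ↦ h.1) hx.1]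

lemma wassDist_eq_intervalIntegral {M : ℝ} (hM : 0 ≤ M) (μ ν : Measure ℝ) :
    wassDist M μ ν = ∫ t in 0..M, |cdf0 μ t - cdf0 ν t| := by
  rw [wassDist, integral_Icc_eq_integral_Ioc, intervalIntegral.integral_of_le hM]

lemma abs_nvCost_sub_nvCost_le {cu co M : ℝ} (hcu : 0 ≤ cu) (hco : 0 ≤ co) {μ ν : Measure ℝ}
    [IsProbabilityMeasure μ] [IsProbabilityMeasure ν]
    (hμ : ∀ᵐ ξ ∂μ, ξ ∈ Icc 0 M) (hν : ∀ᵐ ξ ∂ν, ξ ∈ Icc 0 M) {x : ℝ} (hx : x ∈ Icc 0 M) :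
    |nvCost cu co x μ - nvCost cu co x ν| ≤ max cu co * wassDist M μ ν := by
  set D : ℝ → ℝ := fun t ↦ |cdf0 μ t - cdf0 ν t|
  have hF : ∀ a b, IntervalIntegrable (cdf0 μ) volume a b := fun _ _ ↦ cdf0_mono.intervalIntegrable
  have hH : ∀ a b, IntervalIntegrable (cdf0 ν) volume a b := fun _ _ ↦ cdf0_mono.intervalIntegrable
  have hD : ∀ a b, IntervalIntegrable D volume a b := fun a b ↦ ((hF a b).sub (hH a b)).abs
  have hdiff : nvCost cu co x μ - nvCost cu co x ν =
      cu * (∫ t in x..M, (cdf0 ν t - cdf0 μ t)) + co * ∫ t in 0..x, (cdf0 μ t - cdf0 ν t) := by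
    rw [nvCost_eq_integral_cdf0 cu co hμ hx, nvCost_eq_integral_cdf0 cu co hν hx,
      intervalIntegral.integral_sub (hH x M) (hF x M),
      intervalIntegral.integral_sub (hF 0 x) (hH 0 x),
      intervalIntegral.integral_sub intervalIntegrable_const (hF x M),
      intervalIntegral.integral_sub intervalIntegrable_const (hH x M)]
    ring
  calc |nvCost cu co x μ - nvCost cu co x ν|
      ≤ cu * (∫ t in x..M, D t) + co * ∫ t in 0..x, D t := by
        rw [hdiff]
        refine (abs_add_le _ _).trans (add_le_add ?_ ?_) <;>
          rw [abs_mul, abs_of_nonneg ‹_›] <;> gcongr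
        · exact (intervalIntegral.abs_integral_le_integral_abs hx.2).trans_eq
            (by simp only [D, abs_sub_comm])
        · exact intervalIntegral.abs_integral_le_integral_abs hx.1
    _ ≤ max cu co * ((∫ t in 0..x, D t) + ∫ t in x..M, D t) := by
        have hD0 : ∀ a b, a ≤ b → 0 ≤ ∫ t in a..b, D t :=
          fun a b hab ↦ intervalIntegral.integral_nonneg hab fun _ _ ↦ abs_nonneg _
        nlinarith [le_max_left cu co, le_max_right cu co, hD0 _ _ hx.1, hD0 _ _ hx.2]
    _ = max cu co * wassDist M μ ν := by
        rw [intervalIntegral.integral_add_adjacent_intervals (hD 0 x) (hD x M),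
          wassDist_eq_intervalIntegral (hx.1.trans hx.2)]

lemma wassDist_le_mul_kolDist {M : ℝ} (hM : 0 ≤ M) (μ ν : Measure ℝ) [IsProbabilityMeasure μ]
    [IsProbabilityMeasure ν] : wassDist M μ ν ≤ M * kolDist μ ν := by
  rw [wassDist_eq_intervalIntegral hM, mul_comm]
  refine (le_abs_self _).trans ?_
  simpa [abs_of_nonneg hM] using intervalIntegral.norm_integral_le_of_norm_le_const
    (a := 0) (b := M) (f := fun t ↦ |cdf0 μ t - cdf0 ν t|) fun t _ ↦
      (abs_abs _).trans_le (abs_cdf0_sub_cdf0_le_kolDist μ ν t)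

lemma sub_iInf_le_two_mul_of_abs_sub_le {ι : Type*} [Nonempty ι] {f g : ι → ℝ} {L : ℝ}
    (hg : BddBelow (range g)) (hfg : ∀ i, |f i - g i| ≤ L) {i₀ : ι} (hi₀ : g i₀ = ⨅ i, g i) :
    f i₀ - ⨅ i, f i ≤ 2 * L := by
  have hinf : (⨅ i, g i) - L ≤ ⨅ i, f i := le_ciInf fun i ↦ by
    linarith [ciInf_le hg i, (abs_le.1 (hfg i)).1]
  linarith [(abs_le.1 (hfg i₀)).2]

lemma nvCost_nonneg {cu co : ℝ} (hcu : 0 ≤ cu) (hco : 0 ≤ co) (x : ℝ) (μ : Measure ℝ) :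
    0 ≤ nvCost cu co x μ :=
  integral_nonneg fun _ ↦ by positivity

theorem newsvendor_SAA_regret_general
    (M cu co : ℝ) (hcu : 0 < cu) (hco : 0 < co)
    (μ ν : Measure ℝ) [IsProbabilityMeasure μ] [IsProbabilityMeasure ν]
    (hμ : μ (Set.Icc 0 M) = 1) (hν : ν (Set.Icc 0 M) = 1)
    (xν : ℝ) (hmem : xν ∈ Set.Icc (0:ℝ) M)
    (hxν : nvCost cu co xν ν = optNv cu co M ν) :
    nvCost cu co xν μ - optNv cu co M μ ≤ 2 * max cu co * wassDist M μ ν ∧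
    nvCost cu co xν μ - optNv cu co M μ ≤ 2 * max cu co * M * kolDist μ ν := by
  have hM : 0 ≤ M := hmem.1.trans hmem.2
  have ae_mem {ρ : Measure ℝ} [IsProbabilityMeasure ρ] (h : ρ (Icc 0 M) = 1) :
      ∀ᵐ ξ ∂ρ, ξ ∈ Icc 0 M :=
    (ae_iff_measure_eq measurableSet_Icc.nullMeasurableSet).2 (h.trans measure_univ.symm)
  have : Nonempty (Icc 0 M) := ⟨⟨0, le_rfl, hM⟩⟩
  have hregret : nvCost cu co xν μ - optNv cu co M μ ≤ 2 * (max cu co * wassDist M μ ν) :=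
    sub_iInf_le_two_mul_of_abs_sub_le (f := fun y : Icc 0 M ↦ nvCost cu co y μ) (i₀ := ⟨xν, hmem⟩)
      ⟨0, by rintro _ ⟨y, rfl⟩; exact nvCost_nonneg hcu.le hco.le y ν⟩
      (fun y ↦ abs_nvCost_sub_nvCost_le hcu.le hco.le (ae_mem hμ) (ae_mem hν) y.2) hxν
  refine ⟨by linarith, ?_⟩
  calc nvCost cu co xν μ - optNv cu co M μ ≤ 2 * max cu co * wassDist M μ ν := by linarith
    _ ≤ 2 * max cu co * (M * kolDist μ ν) := by
        have : 0 ≤ max cu co := hcu.le.trans (le_max_left _ _)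
        gcongr
        exact wassDist_le_mul_kolDist hM μ ν
    _ = 2 * max cu co * M * kolDist μ ν := by ring

/-- SAA regret bounds for the newsvendor problem under Wasserstein and Kolmogorov
heterogeneity. -/
theorem newsvendor_SAA_regret
    (M cu co : ℝ) (hM : 0 < M) (hcu : 0 < cu) (hco : 0 < co)
    (μ ν : Measure ℝ) [IsProbabilityMeasure μ] [IsProbabilityMeasure ν]
    (hμ : μ (Set.Icc 0 M) = 1) (hν : ν (Set.Icc 0 M) = 1)
    (xν : ℝ) (hmem : xν ∈ Set.Icc (0:ℝ) M)
    (hxν : nvCost cu co xν ν = optNv cu co M ν) :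
    nvCost cu co xν μ - optNv cu co M μ ≤ 2 * max cu co * wassDist M μ ν ∧
    nvCost cu co xν μ - optNv cu co M μ ≤ 2 * max cu co * M * kolDist μ ν :=
  newsvendor_SAA_regret_general M cu co hcu hco μ ν hμ hν xν hmem hxν
end
end
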